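/- For each a ∈ [1/2, 1], the probability measure ν_a on I = [1/2,1] ∪ {∞} given by density dν_a/dx = 1/(2x²) on (1/2, a) and atom ν_a({∞}) = 1/(2a) satisfies the frozen percolation RDE: if Y₁, Y₂ are i.i.d. with law ν_a, independent of U ~ Uniform[0,1], then Φ(Y₁ ∧ Y₂; U) has law ν_a, where Φ(x;u) = x if x > u and Φ(x;u) = ∞ otherwise. -/

import Mathlib

open MeasureTheory ENNReal

/-- The frozen percolation map `Φ(x;u) = x` if `x > u`, `∞` otherwise, with the
state space `[1/2,1] ∪ {∞}` embedded in `ℝ≥0∞`. -/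
noncomputable def frozenPhi (x : ℝ≥0∞) (u : ℝ) : ℝ≥0∞ :=
  if ENNReal.ofReal u < x then x else ⊤

/-- The measure `ν_a` on `[1/2,1] ∪ {∞} ⊆ ℝ≥0∞`: density `1/(2x²)` on `(1/2,a)`
and an atom of mass `1/(2a)` at `∞`. -/
noncomputable def nuA (a : ℝ) : Measure ℝ≥0∞ :=
  Measure.map ENNReal.ofReal
      ((volume.restrict (Set.Ioo (1/2 : ℝ) a)).withDensity
        (fun x => ENNReal.ofReal (1/(2*x^2)))) +
    ENNReal.ofReal (1/(2*a)) • Measure.dirac ⊤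

/-!
If `Y ~ ν_a` then `P(Y ≥ x) = 1/(2x)` for `x ∈ [1/2, a]`: the density `1/(2y²)` integrates to
`1/(2x) - 1/(2a)` on `[x, a)` and the atom at `∞` contributes the rest. Hence `M = Y₁ ∧ Y₂` has
tail `1/(4x²)`, i.e. density `1/(2x³)` on `(1/2, a)` and an atom at `∞`. Given `M = m < ∞`, the
value `Φ(M; U)` is `m` with probability `m` and `∞` otherwise, so `Φ(M; U)` has density
`x · 1/(2x³) = 1/(2x²)` on `(1/2, a)`: that of `ν_a`. Both laws are probability measures, so
they also agree at `∞`.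
-/

open Set

noncomputable def densityWithAtomAtTop (s : Set ℝ) (f : ℝ → ℝ) (c : ℝ≥0∞) : Measure ℝ≥0∞ :=
  Measure.map ENNReal.ofReal ((volume.restrict s).withDensity fun x => ENNReal.ofReal (f x)) +
    c • Measure.dirac ⊤

section densityWithAtomAtTop

variable {s : Set ℝ} {f : ℝ → ℝ} {c : ℝ≥0∞}

lemma lintegral_densityWithAtomAtTop (hf : Measurable f) {h : ℝ≥0∞ → ℝ≥0∞} (hh : Measurable h) :
    ∫⁻ y, h y ∂densityWithAtomAtTop s f c =
      (∫⁻ x in s, ENNReal.ofReal (f x) * h (ENNReal.ofReal x)) + c * h ⊤ := by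
  rw [densityWithAtomAtTop, lintegral_add_measure, lintegral_smul_measure, lintegral_dirac,
    lintegral_map hh ENNReal.measurable_ofReal, smul_eq_mul,
    lintegral_withDensity_eq_lintegral_mul₀ (g := fun x => h (ENNReal.ofReal x)) (by fun_prop)
      (hh.comp ENNReal.measurable_ofReal).aemeasurable]
  simp only [Pi.mul_apply]

lemma densityWithAtomAtTop_restrict_Iic {t : ℝ≥0∞} (ht : t ≠ ⊤) :
    (densityWithAtomAtTop s f c).restrict (Iic t) =
      densityWithAtomAtTop (s ∩ Iic t.toReal) f 0 := by
  have hpre : ENNReal.ofReal ⁻¹' Iic t = Iic t.toReal := by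
    ext x; exact ENNReal.ofReal_le_iff_le_toReal ht
  rw [densityWithAtomAtTop, densityWithAtomAtTop, Measure.restrict_add, Measure.restrict_smul,
    Measure.restrict_map ENNReal.measurable_ofReal measurableSet_Iic, hpre,
    restrict_withDensity measurableSet_Iic, Measure.restrict_restrict measurableSet_Iic,
    inter_comm, restrict_dirac, if_neg (by simpa using ht), zero_smul, smul_zero]

lemma densityWithAtomAtTop_singleton_top : densityWithAtomAtTop s f c {⊤} = c := by
  have hpre : ENNReal.ofReal ⁻¹' {⊤} = ∅ := by ext x; simp
  rw [densityWithAtomAtTop, Measure.add_apply, Measure.smul_apply,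
    Measure.map_apply ENNReal.measurable_ofReal (measurableSet_singleton _), hpre, measure_empty,
    Measure.dirac_apply_of_mem (mem_singleton _), zero_add, smul_eq_mul, mul_one]

end densityWithAtomAtTop

/-- On `[p, q]`, `F y = F q + ∫_y^q f`: `F` is the tail function of the density `f`. -/
structure IsTailPrimitiveOn (F f : ℝ → ℝ) (p q : ℝ) : Prop where
  hasDerivAt : ∀ y ∈ Icc p q, HasDerivAt F (-f y) y
  continuousOn : ContinuousOn f (Icc p q)
  nonneg : ∀ y ∈ Icc p q, 0 ≤ f y
  primitive_nonneg : ∀ y ∈ Icc p q, 0 ≤ F y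

namespace IsTailPrimitiveOn

variable {F f : ℝ → ℝ} {p q : ℝ}

lemma mono {p' q' : ℝ} (h : IsTailPrimitiveOn F f p q) (hp : p ≤ p') (hq : q' ≤ q) :
    IsTailPrimitiveOn F f p' q' :=
  have hsub := Icc_subset_Icc hp hq
  ⟨fun y hy => h.hasDerivAt y (hsub hy), h.continuousOn.mono hsub,
    fun y hy => h.nonneg y (hsub hy), fun y hy => h.primitive_nonneg y (hsub hy)⟩

lemma sq (h : IsTailPrimitiveOn F f p q) :
    IsTailPrimitiveOn (fun y => F y ^ 2) (fun y => 2 * F y * f y) p q where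
  hasDerivAt y hy := ((h.hasDerivAt y hy).fun_pow 2).congr_deriv (by push_cast; ring)
  continuousOn :=
    (continuousOn_const.mul fun y hy => (h.hasDerivAt y hy).continuousAt.continuousWithinAt).mul
      h.continuousOn
  nonneg y hy := by
    have := h.primitive_nonneg y hy; have := h.nonneg y hy; positivity
  primitive_nonneg y _ := sq_nonneg _

lemma integral_eq_sub (h : IsTailPrimitiveOn F f p q) (hpq : p ≤ q) :
    ∫ y in p..q, f y = F p - F q := by
  have := intervalIntegral.integral_eq_sub_of_hasDerivAt
    (fun y hy => h.hasDerivAt y (by rwa [uIcc_of_le hpq] at hy))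
    (h.continuousOn.neg.intervalIntegrable_of_Icc hpq)
  simp only [intervalIntegral.integral_neg] at this
  linarith

lemma le_primitive_left (h : IsTailPrimitiveOn F f p q) (hpq : p ≤ q) : F q ≤ F p := by
  rw [← sub_nonneg, ← h.integral_eq_sub hpq]
  exact intervalIntegral.integral_nonneg hpq h.nonneg

lemma lintegral_Ioo (h : IsTailPrimitiveOn F f p q) (hpq : p ≤ q) :
    ∫⁻ y in Ioo p q, ENNReal.ofReal (f y) = ENNReal.ofReal (F p - F q) := by
  rw [← ofReal_integral_eq_lintegral_ofReal
      ((h.continuousOn.integrableOn_Icc).mono_set Ioo_subset_Icc_self)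
      ((ae_restrict_mem measurableSet_Ioo).mono fun y hy => h.nonneg y (Ioo_subset_Icc_self hy)),
    ← integral_Ioc_eq_integral_Ioo, ← intervalIntegral.integral_of_le hpq, h.integral_eq_sub hpq]

end IsTailPrimitiveOn

lemma isTailPrimitiveOn_one_div_two_mul {p q : ℝ} (hp : 0 < p) :
    IsTailPrimitiveOn (fun y => 1 / (2 * y)) (fun y => 1 / (2 * y ^ 2)) p q where
  hasDerivAt y hy := by
    have hy0 : y ≠ 0 := (hp.trans_le hy.1).ne'
    have h := ((hasDerivAt_id y).const_mul 2).inv (mul_ne_zero two_ne_zero hy0)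
    simp only [id, mul_one] at h
    simp only [one_div]
    exact h.congr_deriv (by field_simp)
  continuousOn := continuousOn_const.div (by fun_prop) fun y hy => by
    have := hp.trans_le hy.1; positivity
  nonneg y _ := by positivity
  primitive_nonneg y hy := one_div_nonneg.2 (by linarith [hp.trans_le hy.1])

lemma Ioo_max_eq_Ioo_projIcc {p q : ℝ} (hpq : p ≤ q) (z : ℝ) :
    Ioo (max p z) q = Ioo (projIcc p q hpq z : ℝ) q := by
  ext y
  simp only [coe_projIcc, mem_Ioo, max_lt_iff, min_lt_iff]
  constructor
  · rintro ⟨⟨hpy, hzy⟩, hyq⟩; exact ⟨⟨hpy, Or.inr hzy⟩, hyq⟩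
  · rintro ⟨⟨hpy, hqy | hzy⟩, hyq⟩
    · exact absurd hyq hqy.not_gt
    · exact ⟨⟨hpy, hzy⟩, hyq⟩

section TailPrimitive

variable {F f : ℝ → ℝ} {p q : ℝ}

lemma densityWithAtomAtTop_Ici (hp : 0 ≤ p) (hpq : p ≤ q) (h : IsTailPrimitiveOn F f p q)
    {x : ℝ≥0∞} (hx : x ≠ ⊤) :
    densityWithAtomAtTop (Ioo p q) f (ENNReal.ofReal (F q)) (Ici x) =
      ENNReal.ofReal (F (projIcc p q hpq x.toReal)) := by
  set r : ℝ := (projIcc p q hpq x.toReal : ℝ)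
  have hr : r ∈ Icc p q := (projIcc p q hpq x.toReal).2
  have hpre : (ENNReal.ofReal ⁻¹' Ici x ∩ Ioo p q : Set ℝ) =ᵐ[volume] Ioo r q := by
    have hset : (ENNReal.ofReal ⁻¹' Ici x ∩ Ioo p q : Set ℝ) = Ici x.toReal ∩ Ioo p q := by
      ext y
      simp only [mem_inter_iff, mem_preimage, mem_Ici, and_congr_left_iff]
      exact fun hy => ENNReal.le_ofReal_iff_toReal_le hx (hp.trans hy.1.le)
    rw [hset, ← Ioo_max_eq_Ioo_projIcc, max_comm, ← Ioi_inter_Ioo]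
    exact (Ioi_ae_eq_Ici (μ := volume) (a := x.toReal)).symm.inter (ae_eq_refl _)
  have hrq := h.mono hr.1 le_rfl
  rw [densityWithAtomAtTop, Measure.add_apply, Measure.smul_apply,
    Measure.map_apply ENNReal.measurable_ofReal measurableSet_Ici,
    withDensity_apply _ (ENNReal.measurable_ofReal measurableSet_Ici),
    Measure.restrict_restrict (ENNReal.measurable_ofReal measurableSet_Ici),
    setLIntegral_congr hpre, hrq.lintegral_Ioo hr.2,
    Measure.dirac_apply_of_mem (mem_Ici.2 le_top), smul_eq_mul, mul_one,
    ← ENNReal.ofReal_add (sub_nonneg.2 (hrq.le_primitive_left hr.2))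
      (h.primitive_nonneg q (right_mem_Icc.2 hpq)), sub_add_cancel]

lemma densityWithAtomAtTop_univ (hp : 0 ≤ p) (hpq : p ≤ q) (h : IsTailPrimitiveOn F f p q) :
    densityWithAtomAtTop (Ioo p q) f (ENNReal.ofReal (F q)) univ = ENNReal.ofReal (F p) := by
  rw [← Ici_bot, bot_eq_zero, densityWithAtomAtTop_Ici hp hpq h zero_ne_top, toReal_zero,
    projIcc_of_le_left hpq hp]

/-- `P(Y₁ ∧ Y₂ ≥ x) = P(Y ≥ x)²`, so the tail function of the minimum is `F²`. -/
lemma map_min_prod_densityWithAtomAtTop (hp : 0 ≤ p) (hpq : p ≤ q)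
    (h : IsTailPrimitiveOn F f p q) :
    Measure.map (fun y : ℝ≥0∞ × ℝ≥0∞ => min y.1 y.2)
        ((densityWithAtomAtTop (Ioo p q) f (ENNReal.ofReal (F q))).prod
          (densityWithAtomAtTop (Ioo p q) f (ENNReal.ofReal (F q)))) =
      densityWithAtomAtTop (Ioo p q) (fun y => 2 * F y * f y) (ENNReal.ofReal (F q ^ 2)) := by
  have : IsFiniteMeasure (densityWithAtomAtTop (Ioo p q) f (ENNReal.ofReal (F q))) :=
    ⟨by rw [densityWithAtomAtTop_univ hp hpq h]; exact ofReal_lt_top⟩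
  refine Measure.ext_of_Ici _ _ fun x => ?_
  have hpre : (fun y : ℝ≥0∞ × ℝ≥0∞ => min y.1 y.2) ⁻¹' Ici x = Ici x ×ˢ Ici x := by
    ext y; simp only [mem_preimage, mem_Ici, le_min_iff, mem_prod]
  rw [Measure.map_apply (measurable_fst.min measurable_snd) measurableSet_Ici, hpre,
    Measure.prod_prod]
  rcases eq_or_ne x ⊤ with rfl | hx
  · rw [Ici_top, densityWithAtomAtTop_singleton_top, densityWithAtomAtTop_singleton_top,
      ← ENNReal.ofReal_mul (h.primitive_nonneg q (right_mem_Icc.2 hpq)), sq]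
  · rw [densityWithAtomAtTop_Ici hp hpq h hx, densityWithAtomAtTop_Ici hp hpq h.sq hx,
      ← ENNReal.ofReal_mul (h.primitive_nonneg _ (projIcc p q hpq x.toReal).2), sq]

end TailPrimitive

lemma measurable_frozenPhi : Measurable fun p : ℝ≥0∞ × ℝ => frozenPhi p.1 p.2 :=
  Measurable.ite (measurableSet_lt (ENNReal.measurable_ofReal.comp measurable_snd) measurable_fst)
    measurable_fst measurable_const

lemma frozenPhi_le_iff {x t : ℝ≥0∞} {u : ℝ} (ht : t ≠ ⊤) :
    frozenPhi x u ≤ t ↔ ENNReal.ofReal u < x ∧ x ≤ t := by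
  unfold frozenPhi
  split_ifs with h <;> simp [h, ht]

lemma map_frozenPhi_prod_Iic (ρ : Measure ℝ≥0∞) (ν : Measure ℝ) [SFinite ν] {t : ℝ≥0∞}
    (ht : t ≠ ⊤) :
    Measure.map (fun p : ℝ≥0∞ × ℝ => frozenPhi p.1 p.2) (ρ.prod ν) (Iic t) =
      ∫⁻ x in Iic t, ν {u | ENNReal.ofReal u < x} ∂ρ := by
  rw [Measure.map_apply measurable_frozenPhi measurableSet_Iic,
    Measure.prod_apply (measurable_frozenPhi measurableSet_Iic),
    ← lintegral_indicator measurableSet_Iic]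
  refine lintegral_congr fun x => ?_
  by_cases hx : x ≤ t
  · rw [indicator_of_mem (mem_Iic.2 hx)]
    congr 1
    ext u
    simp [frozenPhi_le_iff ht, hx]
  · rw [indicator_of_notMem (notMem_Iic.2 (not_le.1 hx)), ← measure_empty (μ := ν)]
    congr 1
    ext u
    simp [frozenPhi_le_iff ht, hx]

lemma measurable_measure_setOf_ofReal_lt (ν : Measure ℝ) :
    Measurable fun m : ℝ≥0∞ => ν {u | ENNReal.ofReal u < m} :=
  Monotone.measurable fun _ _ hm => measure_mono fun _ hu => lt_of_lt_of_le hu hm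

lemma volume_Icc_zero_one_ofReal_lt {x : ℝ} (hx0 : 0 < x) (hx1 : x ≤ 1) :
    volume.restrict (Icc (0 : ℝ) 1) {u | ENNReal.ofReal u < ENNReal.ofReal x} =
      ENNReal.ofReal x := by
  have hset : {u : ℝ | ENNReal.ofReal u < ENNReal.ofReal x} = Iio x := by
    ext u; exact ENNReal.ofReal_lt_ofReal_iff hx0
  have hinter : Iio x ∩ Icc (0 : ℝ) 1 = Ico 0 x := by
    ext u
    simp only [mem_inter_iff, mem_Iio, mem_Icc, mem_Ico]
    constructor
    · rintro ⟨hux, hu0, -⟩; exact ⟨hu0, hux⟩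
    · rintro ⟨hu0, hux⟩; exact ⟨hux, hu0, hux.le.trans hx1⟩
  rw [hset, Measure.restrict_apply measurableSet_Iio, hinter, Real.volume_Ico, sub_zero]

lemma map_prod_prod_eq_map_prod_map {α β γ δ ε : Type*} [MeasurableSpace α] [MeasurableSpace β]
    [MeasurableSpace γ] [MeasurableSpace δ] [MeasurableSpace ε] (μ : Measure α) (μ' : Measure β)
    (ν : Measure γ) [SFinite μ] [SFinite μ'] [SFinite ν] {f : α × β → δ} {g : δ × γ → ε}
    (hf : Measurable f) (hg : Measurable g) :
    Measure.map (fun p : α × β × γ => g (f (p.1, p.2.1), p.2.2)) (μ.prod (μ'.prod ν)) =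
      Measure.map g ((Measure.map f (μ.prod μ')).prod ν) := by
  conv_rhs => rw [← Measure.map_id (μ := ν), Measure.map_prod_map _ _ hf measurable_id,
    Measure.map_map hg (hf.prodMap measurable_id)]
  rw [← (measurePreserving_prodAssoc μ μ' ν).map_eq,
    Measure.map_map (by fun_prop) MeasurableEquiv.prodAssoc.measurable]
  rfl

lemma nuA_eq_densityWithAtomAtTop (a : ℝ) :
    nuA a = densityWithAtomAtTop (Ioo (1/2) a) (fun y => 1 / (2 * y ^ 2))
      (ENNReal.ofReal (1 / (2 * a))) := rfl

/-- For every `a ∈ [1/2,1]`, the measure `ν_a` solves the frozen percolation RDE: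
if `Y₁, Y₂` are i.i.d. `ν_a` independent of `U ~ Uniform[0,1]`, then
`Φ(Y₁ ∧ Y₂; U)` has law `ν_a`. -/
theorem stmt_5 (a : ℝ) (ha : a ∈ Set.Icc (1/2 : ℝ) 1) :
    Measure.map (fun p : ℝ≥0∞ × ℝ≥0∞ × ℝ => frozenPhi (min p.1 p.2.1) p.2.2)
        ((nuA a).prod ((nuA a).prod (volume.restrict (Set.Icc (0:ℝ) 1)))) =
      nuA a := by
  obtain ⟨ha1, ha2⟩ := ha
  have hF := isTailPrimitiveOn_one_div_two_mul (p := 1/2) (q := a) (by norm_num)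
  have : IsProbabilityMeasure (nuA a) :=
    ⟨(densityWithAtomAtTop_univ (by norm_num) ha1 hF).trans (by norm_num)⟩
  refine Measure.ext_of_Iic _ _ fun t => ?_
  rcases eq_or_ne t ⊤ with rfl | ht
  · have : IsProbabilityMeasure (volume.restrict (Icc (0 : ℝ) 1)) := ⟨by simp⟩
    rw [Iic_top, measure_univ (μ := nuA a)]
    have hmeas : Measurable fun p : ℝ≥0∞ × ℝ≥0∞ × ℝ => frozenPhi (min p.1 p.2.1) p.2.2 :=
      measurable_frozenPhi.comp (f := fun p : ℝ≥0∞ × ℝ≥0∞ × ℝ => (min p.1 p.2.1, p.2.2))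
        (by fun_prop)
    exact (Measure.isProbabilityMeasure_map hmeas.aemeasurable).measure_univ
  rw [map_prod_prod_eq_map_prod_map _ _ _ (measurable_fst.min measurable_snd)
      measurable_frozenPhi, map_frozenPhi_prod_Iic _ _ ht, ← Measure.restrict_apply_univ,
    ← lintegral_one, nuA_eq_densityWithAtomAtTop,
    map_min_prod_densityWithAtomAtTop (by norm_num) ha1 hF,
    densityWithAtomAtTop_restrict_Iic ht, densityWithAtomAtTop_restrict_Iic ht,
    lintegral_densityWithAtomAtTop (by fun_prop) (measurable_measure_setOf_ofReal_lt _),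
    lintegral_densityWithAtomAtTop (by fun_prop) measurable_const]
  simp only [zero_mul, add_zero, mul_one]
  refine setLIntegral_congr_fun (measurableSet_Ioo.inter measurableSet_Iic) fun x hx => ?_
  have hx0 : 0 < x := by linarith [hx.1.1]
  rw [volume_Icc_zero_one_ofReal_lt hx0 (by linarith [hx.1.2]),
    ← ENNReal.ofReal_mul (by positivity)]
  congr 1
  field_simp
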